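/- Let σ₀, σ̂₀ > 0 and let (Σ, g₁, g₂) ∈ E be a point on the branch S₃ of the yield surface, i.e. with A := ‖dev sym Σ‖ + g₁ ≥ 0, B := ‖skew Σ‖ + g₂ ≥ 0 and A²/σ₀² + B²/σ̂₀² = 1, and assume dev sym Σ ≠ 0 and skew Σ ≠ 0. For λ ≥ 0 set ṗ = (2λ/σ₀²)·A·(dev sym Σ)/‖dev sym Σ‖ + (2λ/σ̂₀²)·B·(skew Σ)/‖skew Σ‖, γ̇ = (2λ/σ₀²)·A, ω̇ = (2λ/σ̂₀²)·B. Then (ṗ, γ̇, ω̇) lies in the normal cone to E at (Σ, g₁, g₂): for every (Σ̄, ḡ₁, ḡ₂) ∈ E, ⟨ṗ, Σ̄ − Σ⟩ + γ̇(ḡ₁ − g₁) + ω̇(ḡ₂ − g₂) ≤ 0. -/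
import Mathlib


open Matrix

noncomputable section

abbrev M3 := Matrix (Fin 3) (Fin 3) ℝ

def msym (X : M3) : M3 := (1/2 : ℝ) • (X + Xᵀ)

def mskew (X : M3) : M3 := (1/2 : ℝ) • (X - Xᵀ)

def mdev (X : M3) : M3 := X - (X.trace / 3) • (1 : M3)

def minner (A B : M3) : ℝ := (A * Bᵀ).trace

def mnorm (A : M3) : ℝ := Real.sqrt (minner A A)

lemma minner_eq_sum (A B : M3) :
    minner A B = ∑ p : Fin 3 × Fin 3, A p.1 p.2 * B p.1 p.2 := by
  rw [Fintype.sum_prod_type]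
  simp [minner, Matrix.trace, Matrix.mul_apply, Matrix.diag]

lemma minner_self_nonneg (A : M3) : 0 ≤ minner A A := by
  rw [minner_eq_sum]
  exact Finset.sum_nonneg fun p _ => mul_self_nonneg _

lemma mnorm_sq (A : M3) : mnorm A ^ 2 = minner A A :=
  Real.sq_sqrt (minner_self_nonneg A)

lemma mnorm_pos (A : M3) (h : A ≠ 0) : 0 < mnorm A := by
  have : ∃ i j, A i j ≠ 0 := by
    by_contra hc
    push_neg at hc
    exact h (by ext i j; simp [hc])
  obtain ⟨i, j, hij⟩ := this
  have h1 : A i j * A i j ≤ minner A A := by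
    rw [minner_eq_sum]
    exact Finset.single_le_sum (f := fun p : Fin 3 × Fin 3 => A p.1 p.2 * A p.1 p.2)
      (fun p _ => mul_self_nonneg _) (Finset.mem_univ (i, j))
  have : 0 < minner A A := lt_of_lt_of_le (mul_self_pos.mpr hij) h1
  exact Real.sqrt_pos.mpr this

lemma minner_CS (A B : M3) : minner A B ≤ mnorm A * mnorm B := by
  have h : (minner A B) ^ 2 ≤ minner A A * minner B B := by
    rw [minner_eq_sum, minner_eq_sum, minner_eq_sum]
    have := Finset.sum_mul_sq_le_sq_mul_sq Finset.univ
      (fun p : Fin 3 × Fin 3 => A p.1 p.2) (fun p : Fin 3 × Fin 3 => B p.1 p.2)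
    simpa [pow_two, mul_comm, mul_left_comm, mul_assoc] using this
  calc minner A B ≤ |minner A B| := le_abs_self _
    _ = Real.sqrt ((minner A B) ^ 2) := (Real.sqrt_sq_eq_abs _).symm
    _ ≤ Real.sqrt (minner A A * minner B B) := Real.sqrt_le_sqrt h
    _ = mnorm A * mnorm B := by
        rw [Real.sqrt_mul (minner_self_nonneg A)]; rfl

lemma minner_add_left (A B C : M3) : minner (A + B) C = minner A C + minner B C := by
  simp [minner, Matrix.add_mul]

lemma minner_smul_left (c : ℝ) (A C : M3) : minner (c • A) C = c * minner A C := by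
  simp [minner, Matrix.smul_mul]

lemma minner_add_right (A B C : M3) : minner A (B + C) = minner A B + minner A C := by
  simp [minner, Matrix.transpose_add, Matrix.mul_add]

lemma minner_sub_right (A B C : M3) : minner A (B - C) = minner A B - minner A C := by
  simp [minner, Matrix.transpose_sub, Matrix.mul_sub]

lemma minner_smul_right (c : ℝ) (A B : M3) : minner A (c • B) = c * minner A B := by
  simp [minner, Matrix.transpose_smul, Matrix.mul_smul]

lemma minner_transpose_right_of_symm (D X : M3) (hD : Dᵀ = D) :
    minner D Xᵀ = minner D X := by
  have h : minner D Xᵀ = (D * X).trace := by simp [minner]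
  rw [h, ← Matrix.trace_transpose (D * X), Matrix.transpose_mul, hD,
    Matrix.trace_mul_comm]
  rfl

lemma minner_transpose_right_of_skew (W X : M3) (hW : Wᵀ = -W) :
    minner W Xᵀ = -minner W X := by
  have h : minner W Xᵀ = (W * X).trace := by simp [minner]
  rw [h, ← Matrix.trace_transpose (W * X), Matrix.transpose_mul, hW]
  simp [Matrix.trace_mul_comm Xᵀ W, minner]

lemma minner_one_right (D : M3) (htr : D.trace = 0) : minner D (1 : M3) = 0 := by
  simp [minner, htr]

lemma minner_dev_sym (D X : M3) (hD : Dᵀ = D) (htr : D.trace = 0) :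
    minner D (mdev (msym X)) = minner D X := by
  rw [mdev, minner_sub_right, minner_smul_right, minner_one_right D htr, msym,
    minner_smul_right, minner_add_right, minner_transpose_right_of_symm D X hD]
  ring

lemma minner_skew (W X : M3) (hW : Wᵀ = -W) : minner W (mskew X) = minner W X := by
  rw [mskew, minner_smul_right, minner_sub_right, minner_transpose_right_of_skew W X hW]
  ring

lemma msym_transpose (X : M3) : (msym X)ᵀ = msym X := by
  simp [msym, Matrix.transpose_smul, Matrix.transpose_add, add_comm]

lemma mdev_msym_transpose (X : M3) : (mdev (msym X))ᵀ = mdev (msym X) := by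
  simp [mdev, Matrix.transpose_sub, Matrix.transpose_smul, Matrix.transpose_one,
    msym_transpose]

lemma mdev_trace (X : M3) : (mdev X).trace = 0 := by
  simp [mdev, Matrix.trace_sub, Matrix.trace_smul, Matrix.trace_one]

lemma mskew_transpose (X : M3) : (mskew X)ᵀ = -mskew X := by
  simp only [mskew, Matrix.transpose_smul, Matrix.transpose_sub, Matrix.transpose_transpose, ← smul_neg, neg_sub]

/-- The set `K = K₁ ∪ K₂ ∪ K₃` of the paper. -/
def Kset (s0 sh0 : ℝ) : Set (ℝ × ℝ) :=
  {p | p.1 ≤ s0 ∧ p.2 ≤ 0} ∪ {p | p.1 ≤ 0 ∧ p.2 ≤ sh0} ∪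
    {p | 0 ≤ p.1 ∧ 0 ≤ p.2 ∧ p.1 ^ 2 / s0 ^ 2 + p.2 ^ 2 / sh0 ^ 2 ≤ 1}

/-- The set `E` of admissible generalized stresses. -/
def Eset (s0 sh0 : ℝ) : Set (M3 × ℝ × ℝ) :=
  {x | x.2.1 ≤ 0 ∧ x.2.2 ≤ 0 ∧
    (mnorm (mdev (msym x.1)) + x.2.1, mnorm (mskew x.1) + x.2.2) ∈ Kset s0 sh0}

lemma scalar_ineq (s0 sh0 A B A' B' lam : ℝ) (hs0 : 0 < s0) (hsh0 : 0 < sh0)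
    (hA : 0 ≤ A) (hB : 0 ≤ B) (h1 : A ^ 2 / s0 ^ 2 + B ^ 2 / sh0 ^ 2 = 1)
    (hlam : 0 ≤ lam) (hK : (A', B') ∈ Kset s0 sh0) :
    2 * lam / s0 ^ 2 * A * (A' - A) + 2 * lam / sh0 ^ 2 * B * (B' - B) ≤ 0 := by
  have hs2 : (0:ℝ) < s0 ^ 2 := by positivity
  have hsh2 : (0:ℝ) < sh0 ^ 2 := by positivity
  have h1' : A ^ 2 * sh0 ^ 2 + B ^ 2 * s0 ^ 2 = s0 ^ 2 * sh0 ^ 2 := by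
    field_simp at h1; linarith
  have hA2 : A ^ 2 ≤ s0 ^ 2 := by
    nlinarith [mul_nonneg (mul_nonneg hB hB) hs2.le]
  have hB2 : B ^ 2 ≤ sh0 ^ 2 := by
    nlinarith [mul_nonneg (mul_nonneg hA hA) hsh2.le]
  have hAle : A ≤ s0 := by nlinarith
  have hBle : B ≤ sh0 := by nlinarith
  simp only [Kset, Set.mem_union, Set.mem_setOf_eq] at hK
  have key : A * A' * sh0 ^ 2 + B * B' * s0 ^ 2 ≤ s0 ^ 2 * sh0 ^ 2 := by
    rcases hK with (⟨hA', hB'⟩ | ⟨hA', hB'⟩) | ⟨hA', hB', hell⟩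
    · nlinarith [mul_nonneg hB (neg_nonneg.mpr hB'),
        mul_le_mul_of_nonneg_left hA' hA, mul_le_mul_of_nonneg_right hAle hs0.le]
    · nlinarith [mul_nonneg hA (neg_nonneg.mpr hA'),
        mul_le_mul_of_nonneg_left hB' hB, mul_le_mul_of_nonneg_right hBle hsh0.le]
    · have hell' : A' ^ 2 * sh0 ^ 2 + B' ^ 2 * s0 ^ 2 ≤ s0 ^ 2 * sh0 ^ 2 := by
        rw [div_add_div _ _ (ne_of_gt hs2) (ne_of_gt hsh2),
          div_le_one (by positivity)] at hell
        linarith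
      nlinarith [mul_nonneg (sq_nonneg (A - A')) hsh2.le,
        mul_nonneg (sq_nonneg (B - B')) hs2.le]
  have e : 2 * lam / s0 ^ 2 * A * (A' - A) + 2 * lam / sh0 ^ 2 * B * (B' - B)
      = 2 * lam * ((A * A' * sh0 ^ 2 + B * B' * s0 ^ 2)
          - (A ^ 2 * sh0 ^ 2 + B ^ 2 * s0 ^ 2)) / (s0 ^ 2 * sh0 ^ 2) := by
    field_simp; ring
  rw [e, h1']
  apply div_nonpos_of_nonpos_of_nonneg _ (by positivity)
  nlinarith

set_option maxHeartbeats 1000000 in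
/-- Dual flow rule on the elliptical branch `S₃` of the yield surface: with
`A = ‖dev sym Σ‖ + g₁ ≥ 0`, `B = ‖skew Σ‖ + g₂ ≥ 0`, `A²/σ₀² + B²/σ̂₀² = 1`, the rate
`ṗ = (2λ/σ₀²)·A·(dev sym Σ)/‖dev sym Σ‖ + (2λ/σ̂₀²)·B·(skew Σ)/‖skew Σ‖`,
`γ̇ = (2λ/σ₀²)·A`, `ω̇ = (2λ/σ̂₀²)·B` lies in the normal cone to `E` at `(Σ, g₁, g₂)`. -/
theorem flow_rule_on_S3 (s0 sh0 : ℝ) (hs0 : 0 < s0) (hsh0 : 0 < sh0)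
    (S : M3) (g1 g2 : ℝ) (hE : (S, g1, g2) ∈ Eset s0 sh0)
    (hA : 0 ≤ mnorm (mdev (msym S)) + g1)
    (hB : 0 ≤ mnorm (mskew S) + g2)
    (hS3 : (mnorm (mdev (msym S)) + g1) ^ 2 / s0 ^ 2 +
      (mnorm (mskew S) + g2) ^ 2 / sh0 ^ 2 = 1)
    (hdev : mdev (msym S) ≠ 0) (hskew : mskew S ≠ 0)
    (lam : ℝ) (hlam : 0 ≤ lam) :
    ∀ S' : M3, ∀ g1' g2' : ℝ, (S', g1', g2') ∈ Eset s0 sh0 →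
      minner
        ((2 * lam / s0 ^ 2 * (mnorm (mdev (msym S)) + g1) / mnorm (mdev (msym S))) •
            mdev (msym S) +
          (2 * lam / sh0 ^ 2 * (mnorm (mskew S) + g2) / mnorm (mskew S)) • mskew S)
        (S' - S) +
        (2 * lam / s0 ^ 2 * (mnorm (mdev (msym S)) + g1)) * (g1' - g1) +
        (2 * lam / sh0 ^ 2 * (mnorm (mskew S) + g2)) * (g2' - g2) ≤ 0 := by
  intro S' g1' g2' hE'
  set D := mdev (msym S) with hD_def
  set W := mskew S with hW_def
  set D' := mdev (msym S') with hD'_def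
  set W' := mskew S' with hW'_def
  set nD := mnorm D with hnD_def
  set nW := mnorm W with hnW_def
  set A := nD + g1 with hA_def
  set B := nW + g2 with hB_def
  have hnD : 0 < nD := mnorm_pos D hdev
  have hnW : 0 < nW := mnorm_pos W hskew
  have hDsymm : Dᵀ = D := mdev_msym_transpose S
  have hDtr : D.trace = 0 := mdev_trace (msym S)
  have hWskew : Wᵀ = -W := mskew_transpose S
  -- reduce the matrix inner products
  have hDS' : minner D S' = minner D D' := (minner_dev_sym D S' hDsymm hDtr).symm
  have hDS : minner D S = nD ^ 2 := by
    rw [hnD_def, mnorm_sq]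
    exact (minner_dev_sym D S hDsymm hDtr).symm
  have hWS' : minner W S' = minner W W' := (minner_skew W S' hWskew).symm
  have hWS : minner W S = nW ^ 2 := by
    rw [hnW_def, mnorm_sq]
    exact (minner_skew W S hWskew).symm
  have hCS1 : minner D D' ≤ nD * mnorm D' := minner_CS D D'
  have hCS2 : minner W W' ≤ nW * mnorm W' := minner_CS W W'
  -- expand the left-hand side
  have expand : minner
      ((2 * lam / s0 ^ 2 * A / nD) • D + (2 * lam / sh0 ^ 2 * B / nW) • W) (S' - S)
      = (2 * lam / s0 ^ 2 * A / nD) * (minner D D' - nD ^ 2)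
        + (2 * lam / sh0 ^ 2 * B / nW) * (minner W W' - nW ^ 2) := by
    rw [minner_add_left, minner_smul_left, minner_smul_left, minner_sub_right,
      minner_sub_right, hDS', hDS, hWS', hWS]
  rw [expand]
  have hc1 : 0 ≤ 2 * lam / s0 ^ 2 * A := by positivity
  have hc2 : 0 ≤ 2 * lam / sh0 ^ 2 * B := by positivity
  have step1 : (2 * lam / s0 ^ 2 * A / nD) * (minner D D' - nD ^ 2)
      ≤ 2 * lam / s0 ^ 2 * A * (mnorm D' - nD) := by
    have h1 : (2 * lam / s0 ^ 2 * A / nD) * (minner D D' - nD ^ 2)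
        ≤ (2 * lam / s0 ^ 2 * A / nD) * (nD * mnorm D' - nD ^ 2) := by
      apply mul_le_mul_of_nonneg_left (by linarith) (by positivity)
    have h2 : (2 * lam / s0 ^ 2 * A / nD) * (nD * mnorm D' - nD ^ 2)
        = 2 * lam / s0 ^ 2 * A * (mnorm D' - nD) := by
      field_simp
    linarith
  have step2 : (2 * lam / sh0 ^ 2 * B / nW) * (minner W W' - nW ^ 2)
      ≤ 2 * lam / sh0 ^ 2 * B * (mnorm W' - nW) := by
    have h1 : (2 * lam / sh0 ^ 2 * B / nW) * (minner W W' - nW ^ 2)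
        ≤ (2 * lam / sh0 ^ 2 * B / nW) * (nW * mnorm W' - nW ^ 2) := by
      apply mul_le_mul_of_nonneg_left (by linarith) (by positivity)
    have h2 : (2 * lam / sh0 ^ 2 * B / nW) * (nW * mnorm W' - nW ^ 2)
        = 2 * lam / sh0 ^ 2 * B * (mnorm W' - nW) := by
      field_simp
    linarith
  obtain ⟨hg1', hg2', hK'⟩ := hE'
  have hscal := scalar_ineq s0 sh0 A B (mnorm D' + g1') (mnorm W' + g2') lam
    hs0 hsh0 hA hB hS3 hlam hK'
  nlinarith [step1, step2, hscal]
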